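/- arXiv:math/9912190 — 6 statements merged into one kernel-verified Lean document; each statement's English description precedes it below -/
import Mathlib

section
/- The jacobiator of the omni-Lie bracket satisfies J(e₁,e₂,e₃) = (0, T(e₁,e₂,e₃)), where J(e₁,e₂,e₃) = [[[[e₁,e₂]],e₃]] + cyclic permutations and T(e₁,e₂,e₃) = (1/3)(⟨[[e₁,e₂]],e₃⟩ + cyclic permutations). -/
open Matrix

/-- `gl(n,ℝ)`: real `n × n` matrices. -/
abbrev gl (n : ℕ) := Matrix (Fin n) (Fin n) ℝ

/-- The omni-Lie algebra `E_n = gl(n,ℝ) × ℝⁿ`. -/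
abbrev En (n : ℕ) := gl n × (Fin n → ℝ)

/-- The omni-Lie bracket `[[(A₁,v₁),(A₂,v₂)]] = ([A₁,A₂], ½(A₁v₂ − A₂v₁))`. -/
noncomputable def omniBr {n : ℕ} (a b : En n) : En n :=
  (a.1 * b.1 - b.1 * a.1, (2:ℝ)⁻¹ • (a.1.mulVec b.2 - b.1.mulVec a.2))

/-- The symmetric `ℝⁿ`-valued form `⟨(A₁,v₁),(A₂,v₂)⟩ = ½(A₁v₂ + A₂v₁)`. -/
noncomputable def omniFm {n : ℕ} (a b : En n) : Fin n → ℝ :=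
  (2:ℝ)⁻¹ • (a.1.mulVec b.2 + b.1.mulVec a.2)

/-- The Cartan 3-form `T(e₁,e₂,e₃) = ⅓(⟨[[e₁,e₂]],e₃⟩ + c.p.)`. -/
noncomputable def omniT {n : ℕ} (e₁ e₂ e₃ : En n) : Fin n → ℝ :=
  (3:ℝ)⁻¹ • (omniFm (omniBr e₁ e₂) e₃ + omniFm (omniBr e₂ e₃) e₁ + omniFm (omniBr e₃ e₁) e₂)

/-- the jacobiator of the omni-Lie bracket equals `(0, T(e₁,e₂,e₃))`. -/
theorem omni_jacobiator (n : ℕ) (e₁ e₂ e₃ : En n) :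
    omniBr (omniBr e₁ e₂) e₃ + omniBr (omniBr e₂ e₃) e₁ + omniBr (omniBr e₃ e₁) e₂
      = ((0 : gl n), omniT e₁ e₂ e₃) := by
  obtain ⟨A, u⟩ := e₁; obtain ⟨B, v⟩ := e₂; obtain ⟨C, w⟩ := e₃
  refine Prod.ext ?_ ?_
  · show (A*B - B*A)*C - C*(A*B-B*A) + ((B*C - C*B)*A - A*(B*C-C*B))
      + ((C*A - A*C)*B - B*(C*A-A*C)) = 0
    noncomm_ring
  · funext i
    simp only [omniBr, omniFm, omniT, Prod.snd_add, Prod.fst_add, mulVec_smul,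
      sub_mulVec, mulVec_sub, mulVec_add, add_mulVec, smul_mulVec,
      mulVec_mulVec, Pi.smul_apply, Pi.add_apply, Pi.sub_apply, smul_eq_mul]
    ring
end

section
/- If B is a skew-symmetric bilinear operation on ℝⁿ, then its graph F_B is a maximal isotropic subspace of E_n: any isotropic subspace containing F_B equals F_B. -/
open Matrix

/-- The adjoint operator of a bilinear operation `B` on `ℝⁿ`: `ad_B(v)` is the matrix of
the linear map `w ↦ B(v,w)`. -/
noncomputable def adB {n : ℕ} (B : (Fin n → ℝ) →ₗ[ℝ] (Fin n → ℝ) →ₗ[ℝ] (Fin n → ℝ))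
    (v : Fin n → ℝ) : gl n :=
  LinearMap.toMatrix' (B v)

/-- The graph `F_B = {(ad_B(v), v) : v ∈ ℝⁿ} ⊆ E_n`. -/
noncomputable def FB {n : ℕ} (B : (Fin n → ℝ) →ₗ[ℝ] (Fin n → ℝ) →ₗ[ℝ] (Fin n → ℝ)) :
    Set (En n) :=
  Set.range fun v => (adB B v, v)

/-- for skew-symmetric bilinear `B`, the graph `F_B` is a *maximal*
isotropic subspace of `E_n`: any isotropic subspace containing `F_B` equals `F_B`. -/
theorem graph_maximal_isotropic (n : ℕ)
    (B : (Fin n → ℝ) →ₗ[ℝ] (Fin n → ℝ) →ₗ[ℝ] (Fin n → ℝ))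
    (hskew : ∀ v w, B v w = - B w v)
    (G : Submodule ℝ (En n))
    (hiso : ∀ e₁ ∈ G, ∀ e₂ ∈ G, omniFm e₁ e₂ = 0)
    (hsub : FB B ⊆ (G : Set (En n))) :
    (G : Set (En n)) = FB B := by
  apply Set.Subset.antisymm _ hsub
  rintro ⟨A, v⟩ hG
  have key : ∀ w : Fin n → ℝ, A.mulVec w = (adB B v).mulVec w := by
    intro w
    have hw : ((adB B w, w) : En n) ∈ G := hsub ⟨w, rfl⟩
    have h0 := hiso _ hG _ hw
    have h0' : A.mulVec w + (adB B w).mulVec v = 0 := by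
      have := congrArg (fun f => (2:ℝ) • f) h0
      simpa [omniFm, smul_smul] using this
    have had : ∀ u x : Fin n → ℝ, (adB B u).mulVec x = B u x := by
      intro u x
      have h1 : Matrix.toLin' (adB B u) x = B u x := by
        rw [adB, Matrix.toLin'_toMatrix']
      rwa [Matrix.toLin'_apply] at h1
    rw [had] at h0' ⊢
    rw [hskew w v] at h0'
    funext i
    have hi := congrFun h0' i
    simp only [Pi.add_apply, Pi.neg_apply, Pi.zero_apply] at hi
    linarith
  have hAv : A = adB B v := by
    have : Matrix.toLin' A = Matrix.toLin' (adB B v) := by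
      apply LinearMap.ext
      intro w
      simpa [Matrix.toLin'_apply] using key w
    exact Matrix.toLin'.injective this
  exact ⟨v, by rw [hAv]⟩
end

section
/- Let B be a skew-symmetric bilinear operation on ℝⁿ. Then B satisfies the Jacobi identity if and only if the graph F_B is closed under the bracket [[(A₁,v₁),(A₂,v₂)]] = ([A₁,A₂], ½(A₁v₂ − A₂v₁)) on E_n. -/
open Matrix

lemma adB_mulVec {n : ℕ} (B : (Fin n → ℝ) →ₗ[ℝ] (Fin n → ℝ) →ₗ[ℝ] (Fin n → ℝ))
    (v w : Fin n → ℝ) : (adB B v).mulVec w = B v w := by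
  rw [adB, ← Matrix.toLin'_apply, Matrix.toLin'_toMatrix']

/-- a skew-symmetric bilinear `B` satisfies the Jacobi identity iff its
graph `F_B` is closed under the omni-Lie bracket on `E_n`. -/
theorem jacobi_iff_graph_closed (n : ℕ)
    (B : (Fin n → ℝ) →ₗ[ℝ] (Fin n → ℝ) →ₗ[ℝ] (Fin n → ℝ))
    (hskew : ∀ v w, B v w = - B w v) :
    (∀ u v w, B (B u v) w + B (B v w) u + B (B w u) v = 0) ↔
      (∀ e₁ ∈ FB B, ∀ e₂ ∈ FB B, omniBr e₁ e₂ ∈ FB B) := by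
  constructor
  · intro hJ
    rintro _ ⟨u, rfl⟩ _ ⟨v, rfl⟩
    have hop : ∀ w, B (B u v) w = B u (B v w) - B v (B u w) := by
      intro w
      have hJ' := hJ u v w
      funext i
      have h := congrFun hJ' i
      have e1 := congrFun (hskew (B v w) u) i
      have e2 : B (B w u) v = B v (B u w) := by
        rw [hskew w u, map_neg, LinearMap.neg_apply, hskew, neg_neg]
      have e2' := congrFun e2 i
      simp only [Pi.add_apply, Pi.sub_apply, Pi.neg_apply, Pi.zero_apply] at h e1 e2' ⊢
      linarith
    have h2 : (2:ℝ)⁻¹ • ((adB B u).mulVec v - (adB B v).mulVec u) = B u v := by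
      rw [adB_mulVec, adB_mulVec, hskew v u]
      funext i
      simp only [Pi.smul_apply, Pi.sub_apply, Pi.neg_apply, smul_eq_mul]
      ring
    have h1 : adB B (B u v) = adB B u * adB B v - adB B v * adB B u := by
      unfold adB
      rw [← LinearMap.toMatrix'_comp, ← LinearMap.toMatrix'_comp, ← map_sub]
      congr 1
      refine LinearMap.ext fun w => ?_
      simp only [LinearMap.sub_apply, LinearMap.comp_apply]
      exact hop w
    exact ⟨B u v, by simp only [omniBr, Prod.mk.injEq]; exact ⟨h1, h2.symm⟩⟩
  · intro hcl u v w
    obtain ⟨x, hx⟩ := hcl _ ⟨u, rfl⟩ _ ⟨v, rfl⟩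
    simp only [omniBr, Prod.mk.injEq] at hx
    obtain ⟨hA, hv⟩ := hx
    have hx2 : x = B u v := by
      rw [hv, adB_mulVec, adB_mulVec, hskew v u]
      funext i
      simp only [Pi.smul_apply, Pi.sub_apply, Pi.neg_apply, smul_eq_mul]
      ring
    have := congrArg (fun M => M.mulVec w) hA
    simp only [Matrix.sub_mulVec, ← Matrix.mulVec_mulVec, adB_mulVec] at this
    rw [hx2] at this
    -- this : B (B u v) w = B u (B v w) - B v (B u w)
    funext i
    have h := congrFun this i
    have e1 := congrFun (hskew (B v w) u) i
    have e2 : B (B w u) v = B v (B u w) := by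
      rw [hskew w u, map_neg, LinearMap.neg_apply, hskew, neg_neg]
    have e2' := congrFun e2 i
    simp only [Pi.add_apply, Pi.sub_apply, Pi.neg_apply, Pi.zero_apply] at h e1 e2' ⊢
    linarith
end

section
/- If B is a Lie algebra structure on ℝⁿ (skew-symmetric and satisfying Jacobi), then the projection (A,v) ↦ v restricted to F_B is a linear isomorphism onto ℝⁿ, and it carries the restricted E_n bracket to B, i.e. the projection of [[(ad_B(v), v), (ad_B(w), w)]] equals B(v,w). -/
open Matrix

/-- if `B` is a Lie algebra structure on `ℝⁿ`, the projection
`(A,v) ↦ v` restricted to `F_B` is a (linear) bijection onto `ℝⁿ` carrying the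
restricted `E_n` bracket to `B`. -/
theorem graph_projection_iso (n : ℕ)
    (B : (Fin n → ℝ) →ₗ[ℝ] (Fin n → ℝ) →ₗ[ℝ] (Fin n → ℝ))
    (hskew : ∀ v w, B v w = - B w v)
    (hjac : ∀ u v w, B (B u v) w + B (B v w) u + B (B w u) v = 0) :
    Set.BijOn (fun e : En n => e.2) (FB B) Set.univ ∧
    (∀ v w : Fin n → ℝ, (omniBr (adB B v, v) (adB B w, w)).2 = B v w) := by
  have hmul : ∀ v w : Fin n → ℝ, (adB B v).mulVec w = B v w := by
    intro v w
    simp [adB, ← Matrix.toLin'_apply]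
  refine ⟨⟨fun _ _ => trivial, ?_, ?_⟩, ?_⟩
  · rintro _ ⟨v, rfl⟩ _ ⟨w, rfl⟩ h
    simp only at h
    simp [h]
  · rintro v -
    exact ⟨(adB B v, v), ⟨v, rfl⟩, rfl⟩
  · intro v w
    have h := hskew v w
    simp only [omniBr, hmul, h]
    funext i
    simp
    ring
end

section
/- If F is a maximal isotropic subspace of E_n closed under the bracket (a D-structure), then the restriction of the bracket to F satisfies the Jacobi identity, making F a Lie algebra. -/
open Matrix

/-- if `F` is a D-structure (a maximal isotropic subspace of `E_n`
closed under the bracket), then the restricted bracket satisfies the Jacobi identity. -/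
theorem Dstructure_jacobi (n : ℕ) (F : Submodule ℝ (En n))
    (hiso : ∀ e₁ ∈ F, ∀ e₂ ∈ F, omniFm e₁ e₂ = 0)
    (hmax : ∀ G : Submodule ℝ (En n),
      (∀ e₁ ∈ G, ∀ e₂ ∈ G, omniFm e₁ e₂ = 0) → F ≤ G → G = F)
    (hclosed : ∀ e₁ ∈ F, ∀ e₂ ∈ F, omniBr e₁ e₂ ∈ F) :
    ∀ e₁ ∈ F, ∀ e₂ ∈ F, ∀ e₃ ∈ F,
      omniBr (omniBr e₁ e₂) e₃ + omniBr (omniBr e₂ e₃) e₁ + omniBr (omniBr e₃ e₁) e₂ = 0 := by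
  intro e₁ h₁ e₂ h₂ e₃ h₃
  have hS : omniFm (omniBr e₁ e₂) e₃ + omniFm (omniBr e₂ e₃) e₁ + omniFm (omniBr e₃ e₁) e₂
      = 0 := by
    rw [hiso _ (hclosed _ h₁ _ h₂) _ h₃, hiso _ (hclosed _ h₂ _ h₃) _ h₁,
      hiso _ (hclosed _ h₃ _ h₁) _ h₂]
    simp
  have key : omniBr (omniBr e₁ e₂) e₃ + omniBr (omniBr e₂ e₃) e₁ + omniBr (omniBr e₃ e₁) e₂
      = (0, (3:ℝ)⁻¹ • (omniFm (omniBr e₁ e₂) e₃ + omniFm (omniBr e₂ e₃) e₁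
        + omniFm (omniBr e₃ e₁) e₂)) := by
    simp only [omniBr, omniFm, Prod.mk_add_mk, Prod.mk.injEq]
    constructor
    · noncomm_ring
    · simp only [mulVec_smul, mulVec_sub, mulVec_add, smul_add, smul_sub, sub_mulVec, add_mulVec, mulVec_mulVec]
      module
  rw [key, hS, smul_zero]; rfl
end

section
/- On E_n, the modified adjoint-invariance axiom holds: for all e, h₁, h₂ ∈ E_n, ρ(e)⟨h₁,h₂⟩ = ⟨[[e,h₁]] + D⟨e,h₁⟩, h₂⟩ + ⟨h₁, [[e,h₂]] + D⟨e,h₂⟩⟩, where ρ(A,v) = A acts on ℝⁿ-valued quantities by matrix multiplication and Dw = (0,w). -/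
open Matrix

/-- The gradient `D : ℝⁿ → E_n`, `Dw = (0, w)`. -/
def omniD {n : ℕ} (w : Fin n → ℝ) : En n := (0, w)

/-- modified adjoint invariance:
`ρ(e)⟨h₁,h₂⟩ = ⟨[[e,h₁]] + D⟨e,h₁⟩, h₂⟩ + ⟨h₁, [[e,h₂]] + D⟨e,h₂⟩⟩`. -/
theorem omni_adjoint_invariance (n : ℕ) (e h₁ h₂ : En n) :
    e.1.mulVec (omniFm h₁ h₂)
      = omniFm (omniBr e h₁ + omniD (omniFm e h₁)) h₂
        + omniFm h₁ (omniBr e h₂ + omniD (omniFm e h₂)) := by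
  funext i
  simp [omniFm, omniBr, omniD, mulVec_add, add_mulVec, sub_mulVec, mulVec_smul,
    mulVec_mulVec, smul_add, smul_sub, Pi.add_apply, Pi.smul_apply, smul_eq_mul]
  ring
end
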